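/- arXiv:1301.6143 — 3 statements merged into one kernel-verified Lean document; each statement's English description precedes it below -/
import Mathlib

section
/- Let ℓ₂ be the complex Hilbert space of square-summable complex sequences, let g₀ ∈ ℓ₂ with ‖g₀‖ = 1, and let ε ∈ (0,1). Suppose there exists a bounded linear operator T on ℓ₂ which has no eigenvector (there is no non-zero x ∈ ℓ₂ and λ ∈ ℂ with Tx = λx) and which satisfies (P3'): for every non-zero x ∈ ℓ₂ the distance of the closed linear span M_x of Orb(x,T) to g₀ is less than ε, i.e. inf{‖y − g₀‖ : y ∈ M_x} < ε. Then there exists a bounded linear operator T' on ℓ₂ which has no non-trivial invariant closed subspace, i.e. every non-zero vector of ℓ₂ is cyclic for T'. -/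
/-!
By Zorn's lemma there is a minimal element `N` among the closed `T`-invariant subspaces at
distance `≤ ε` from `g₀`: along a decreasing chain the projections of `g₀` onto the orthogonal
complements converge, so the intersection of the chain is still within `ε` of `g₀`. For every
non-zero `x ∈ N`, (P3') puts `M_x ⊆ N` in the same family, so `M_x = N` by minimality; and
`N ≠ 0` because `ε < ‖g₀‖`. Since `T` has no eigenvector, `N` is infinite dimensional, hence
isometric to `ℓ₂`, and `T|_N` transported along this isometry has every non-zero vector cyclic.
-/

abbrev ellTwo : Type := lp (fun _ : ℕ => ℂ) 2

open Metric Set Filter Topology Submodule TopologicalSpace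

section Projection

variable {𝕜 E : Type*} [RCLike 𝕜] [NormedAddCommGroup E] [InnerProductSpace 𝕜 E]

theorem Submodule.norm_sub_starProjection_eq_infDist (K : Submodule 𝕜 E)
    [K.HasOrthogonalProjection] (g : E) : ‖g - K.starProjection g‖ = infDist g K := by
  rw [starProjection_minimal, infDist_eq_iInf]
  simp only [dist_eq_norm]
  rfl

/-- Along the chain, `Kᗮ` increases, so the projections of `g` onto the `Kᗮ` converge to its
projection onto `W = closure (⨆ Kᗮ)`; then `g - P_W g` lies in `Wᗮ ⊆ K` for every `K`. -/
theorem infDist_sInf_le_of_isChain [CompleteSpace E] {c : Set (Submodule 𝕜 E)}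
    (hc : IsChain (· ≤ ·) c) (hne : c.Nonempty) (hcl : ∀ K ∈ c, IsClosed (K : Set E))
    {g : E} {ε : ℝ} (hε : ∀ K ∈ c, infDist g K ≤ ε) :
    infDist g (sInf c : Submodule 𝕜 E) ≤ ε := by
  have : IsCodirectedOrder c := ⟨fun K L => (hc.total K.2 L.2).elim
    (fun h => ⟨K, le_rfl, h⟩) fun h => ⟨L, h, le_rfl⟩⟩
  have : Nonempty c := hne.to_subtype
  have hproj (K : Submodule 𝕜 E) (hK : K ∈ c) : K.HasOrthogonalProjection :=
    have := (hcl K hK).completeSpace_coe; inferInstance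
  let U : (↥c)ᵒᵈ → Submodule 𝕜 E := fun K => (OrderDual.ofDual K).1ᗮ
  have hU : Monotone U := fun _ _ h => orthogonal_le h
  set W := (⨆ K, U K).topologicalClosure
  have hW : ‖W.starProjection g‖ ≤ ε := by
    refine le_of_tendsto (starProjection_tendsto_closure_iSup U hU g).norm
      (Eventually.of_forall fun K => ?_)
    have := hproj _ (OrderDual.ofDual K).2
    rw [starProjection_orthogonal_val, norm_sub_starProjection_eq_infDist]
    exact hε _ (OrderDual.ofDual K).2
  have hmem : g - W.starProjection g ∈ sInf c := by
    refine mem_sInf.2 fun K hK => ?_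
    have := hproj K hK
    have hWK : Wᗮ ≤ K := orthogonal_le_iff_orthogonal_le.2 <|
      (le_iSup U (OrderDual.toDual ⟨K, hK⟩)).trans (le_topologicalClosure _)
    exact hWK (sub_starProjection_mem_orthogonal g)
  calc infDist g (sInf c : Submodule 𝕜 E) ≤ dist g (g - W.starProjection g) :=
        infDist_le_dist_of_mem hmem
    _ = ‖W.starProjection g‖ := by rw [dist_eq_norm, sub_sub_cancel]
    _ ≤ ε := hW

end Projection

section SeparableHilbertSpace

variable {𝕜 E : Type*} [RCLike 𝕜] [NormedAddCommGroup E] [InnerProductSpace 𝕜 E]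

theorem Orthonormal.countable [SeparableSpace E] {ι : Type*} {v : ι → E}
    (hv : Orthonormal 𝕜 v) : Countable ι := by
  refine Pairwise.countable_of_isOpen_disjoint (s := fun i => ball (v i) 2⁻¹)
    (fun i j hij => ball_disjoint_ball ?_) (fun _ => isOpen_ball)
    (fun i => ⟨v i, mem_ball_self (by norm_num)⟩)
  have h := @norm_sub_sq 𝕜 _ _ _ _ (v i) (v j)
  rw [hv.1 i, hv.1 j, hv.2 hij, map_zero] at h
  rw [dist_eq_norm]
  nlinarith [norm_nonneg (v i - v j)]

theorem HilbertBasis.separableSpace {ι : Type*} [Countable ι] (b : HilbertBasis ι 𝕜 E) :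
    SeparableSpace E := by
  have h := (countable_range b).isSeparable.span (R := 𝕜) |>.closure
  rwa [← topologicalClosure_coe, b.dense_span, top_coe, isSeparable_univ_iff] at h

theorem nonempty_linearIsometryEquiv_lp_nat [CompleteSpace E] [SeparableSpace E]
    (h : ¬ FiniteDimensional 𝕜 E) : Nonempty (E ≃ₗᵢ[𝕜] lp (fun _ : ℕ => 𝕜) 2) := by
  obtain ⟨w, b, -⟩ := exists_hilbertBasis 𝕜 E
  have : Countable w := b.orthonormal.countable
  have : Infinite w := by
    by_contra hfin
    have : Fintype w := @Fintype.ofFinite _ (not_infinite_iff_finite.1 hfin)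
    exact h b.toOrthonormalBasis.toBasis.finiteDimensional_of_finite
  obtain ⟨e⟩ := nonempty_equiv_of_countable (α := w) (β := ℕ)
  have hrange : range (b ∘ e.symm) = range b := e.symm.surjective.range_comp b
  refine ⟨(HilbertBasis.mk (b.orthonormal.comp _ e.symm.injective) ?_).repr⟩
  rw [hrange, b.dense_span]

end SeparableHilbertSpace

theorem Module.End.exists_eigenvector_mem_of_mapsTo {K V : Type*} [Field K] [IsAlgClosed K]
    [AddCommGroup V] [Module K V] {f : Module.End K V} {N : Submodule K V}
    [FiniteDimensional K N] (hN : N ≠ ⊥) (hfN : MapsTo f N N) :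
    ∃ x ∈ N, x ≠ 0 ∧ ∃ μ : K, f x = μ • x := by
  have : Nontrivial N := nontrivial_iff_ne_bot.2 hN
  obtain ⟨μ, hμ⟩ := Module.End.exists_eigenvalue (f.restrict hfN)
  obtain ⟨v, hv⟩ := hμ.exists_hasEigenvector
  exact ⟨v, v.2, by simpa using hv.2, μ, congrArg Subtype.val hv.apply_eq_smul⟩

namespace ContinuousLinearMap

variable {𝕜 E F : Type*} [RCLike 𝕜] [NormedAddCommGroup E] [NormedAddCommGroup F]
  [NormedSpace 𝕜 E] [NormedSpace 𝕜 F]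

def orbitSpan (T : E →L[𝕜] E) (x : E) : Submodule 𝕜 E :=
  span 𝕜 (range fun n : ℕ => (T ^ n) x)

variable (T : E →L[𝕜] E)

theorem orbitSpan_le {N : Submodule 𝕜 E} (hN : MapsTo T N N) {x : E} (hx : x ∈ N) :
    T.orbitSpan x ≤ N := by
  refine span_le.2 ?_
  rintro _ ⟨n, rfl⟩
  dsimp only
  induction n with
  | zero => simpa using hx
  | succ n ih => rw [pow_succ']; exact hN ih

theorem mapsTo_orbitSpan (x : E) : MapsTo T (T.orbitSpan x) (T.orbitSpan x) := by
  change T.orbitSpan x ≤ (T.orbitSpan x).comap (T : E →ₗ[𝕜] E)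
  refine span_le.2 ?_
  rintro _ ⟨n, rfl⟩
  exact subset_span ⟨n + 1, by simp only [pow_succ']; rfl⟩

theorem mapsTo_topologicalClosure_orbitSpan (x : E) :
    MapsTo T (T.orbitSpan x).topologicalClosure (T.orbitSpan x).topologicalClosure := by
  simpa only [topologicalClosure_coe] using (T.mapsTo_orbitSpan x).closure T.continuous

theorem coe_pow_restrict_apply {N : Submodule 𝕜 E} (hN : ∀ x ∈ N, T x ∈ N) (n : ℕ) (x : N) :
    (((T.restrict hN) ^ n) x : E) = (T ^ n) x := by
  induction n with
  | zero => rfl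
  | succ n ih => rw [pow_succ', pow_succ']; exact congrArg T ih

theorem dense_orbitSpan_restrict {N : Submodule 𝕜 E} (hN : ∀ x ∈ N, T x ∈ N) (x : N)
    (hx : N ≤ (T.orbitSpan x).topologicalClosure) :
    Dense ((T.restrict hN).orbitSpan x : Set N) := by
  have hmap : ((T.restrict hN).orbitSpan x).map N.subtype = T.orbitSpan x := by
    rw [orbitSpan, orbitSpan, map_span, ← range_comp]
    simp only [Function.comp_def, subtype_apply, coe_pow_restrict_apply]
  have himage : Subtype.val '' ((T.restrict hN).orbitSpan x : Set N) = T.orbitSpan x := by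
    rw [← hmap, map_coe]; rfl
  refine (IsInducing.subtypeVal (t := (N : Set E))).dense_iff.2 fun y => ?_
  have hy := hx y.2
  rwa [← SetLike.mem_coe, topologicalClosure_coe, ← himage] at hy

theorem dense_orbitSpan_conj (e : E ≃L[𝕜] F) (x : F)
    (hx : Dense (T.orbitSpan (e.symm x) : Set E)) :
    Dense ((e.conjContinuousAlgEquiv T).orbitSpan x : Set F) := by
  have horbit : (range fun n : ℕ => ((e.conjContinuousAlgEquiv T) ^ n) x)
      = e '' range fun n : ℕ => (T ^ n) (e.symm x) := by
    rw [← range_comp]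
    simp only [← map_pow, Function.comp_def,
      ContinuousLinearEquiv.conjContinuousAlgEquiv_apply_apply]
  have hmap :
      ((e.conjContinuousAlgEquiv T).orbitSpan x : Set F) = e '' T.orbitSpan (e.symm x) := by
    rw [orbitSpan, horbit]
    exact (congrArg _ (span_image (e : E →ₗ[𝕜] F))).trans (map_coe _ _)
  rw [hmap]
  exact e.surjective.denseRange.dense_image e.continuous hx

end ContinuousLinearMap

section MinimalInvariantSubspace

variable {𝕜 E : Type*} [RCLike 𝕜] [NormedAddCommGroup E] [InnerProductSpace 𝕜 E]
  {T : E →L[𝕜] E} {g : E} {ε : ℝ}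

theorem exists_minimal_invariant_infDist_le [CompleteSpace E] {N₀ : Submodule 𝕜 E}
    (hN₀ : IsClosed (N₀ : Set E) ∧ MapsTo T N₀ N₀ ∧ infDist g N₀ ≤ ε) :
    ∃ N : Submodule 𝕜 E,
      Minimal (fun N : Submodule 𝕜 E => IsClosed (N : Set E) ∧ MapsTo T N N ∧
        infDist g N ≤ ε) N := by
  set S : Set (Submodule 𝕜 E)ᵒᵈ :=
    {N | IsClosed (N.ofDual : Set E) ∧ MapsTo T N.ofDual N.ofDual ∧ infDist g N.ofDual ≤ ε}
  have hchain : ∀ c ⊆ S, IsChain (· ≤ ·) c → ∀ K ∈ c, ∃ ub ∈ S, ∀ L ∈ c, L ≤ ub := by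
    intro c hcS hc K hK
    set c' : Set (Submodule 𝕜 E) := OrderDual.toDual ⁻¹' c
    have hc' : IsChain (· ≤ ·) c' := fun K hK L hL hKL => (hc hK hL hKL).symm
    have hsInf : IsClosed ((sInf c' : Submodule 𝕜 E) : Set E) ∧
        MapsTo T (sInf c' : Submodule 𝕜 E) (sInf c' : Submodule 𝕜 E) ∧
        infDist g (sInf c' : Submodule 𝕜 E) ≤ ε := by
      refine ⟨?_, fun x hx => ?_, ?_⟩
      · rw [coe_sInf]
        exact isClosed_biInter fun L hL => (hcS hL).1
      · simp only [SetLike.mem_coe, mem_sInf] at hx ⊢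
        exact fun L hL => (hcS hL).2.1 (hx L hL)
      · exact infDist_sInf_le_of_isChain hc' ⟨K.ofDual, hK⟩ (fun L hL => (hcS hL).1)
          fun L hL => (hcS hL).2.2
    exact ⟨OrderDual.toDual (sInf c'), hsInf, fun L hL => sInf_le (show L.ofDual ∈ c' from hL)⟩
  obtain ⟨N, -, hN⟩ := zorn_le_nonempty₀ S hchain (OrderDual.toDual N₀) hN₀
  exact ⟨N.ofDual, hN⟩

theorem topologicalClosure_orbitSpan_eq_of_minimal {N : Submodule 𝕜 E}
    (hN : Minimal (fun N : Submodule 𝕜 E => IsClosed (N : Set E) ∧ MapsTo T N N ∧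
      infDist g N ≤ ε) N)
    (hT : ∀ x ≠ 0, infDist g (T.orbitSpan x).topologicalClosure ≤ ε) {x : E} (hxN : x ∈ N)
    (hx : x ≠ 0) : (T.orbitSpan x).topologicalClosure = N :=
  hN.eq_of_le ⟨isClosed_topologicalClosure _, T.mapsTo_topologicalClosure_orbitSpan x, hT x hx⟩
    (topologicalClosure_minimal _ (T.orbitSpan_le hN.1.2.1 hxN) hN.1.1)

end MinimalInvariantSubspace

theorem exists_operator_without_invariant_subspace_of_P3'_general
    (g₀ : ellTwo) (hg₀ : ‖g₀‖ = 1) (ε : ℝ) (hε1 : ε < 1)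
    (T : ellTwo →L[ℂ] ellTwo)
    -- `T` has no eigenvector:
    (heig : ∀ x : ellTwo, x ≠ 0 → ∀ l : ℂ, T x ≠ l • x)
    -- (P3'): the distance of the closed linear span of any orbit of a non-zero vector
    -- to `g₀` is `< ε`:
    (hP3' : ∀ x : ellTwo, x ≠ 0 →
      Metric.infDist g₀
        (((Submodule.span ℂ (Set.range fun n : ℕ => (T ^ n) x)).topologicalClosure :
          Submodule ℂ ellTwo) : Set ellTwo) < ε) :
    ∃ T' : ellTwo →L[ℂ] ellTwo,
      ∀ x : ellTwo, x ≠ 0 →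
        Dense ((Submodule.span ℂ (Set.range fun n : ℕ => (T' ^ n) x) :
          Submodule ℂ ellTwo) : Set ellTwo) := by
  have hg₀0 : g₀ ≠ 0 := by rintro rfl; simp at hg₀
  obtain ⟨N, hN⟩ := exists_minimal_invariant_infDist_le
    ⟨isClosed_topologicalClosure _, T.mapsTo_topologicalClosure_orbitSpan g₀, (hP3' g₀ hg₀0).le⟩
  have hN0 : N ≠ ⊥ := by
    rintro rfl
    have h := hN.1.2.2
    rw [bot_coe, infDist_singleton, dist_zero_right, hg₀] at h
    linarith
  have hNinf : ¬ FiniteDimensional ℂ N := fun _ => by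
    obtain ⟨x, -, hx0, μ, hx⟩ :=
      Module.End.exists_eigenvector_mem_of_mapsTo (f := (T : ellTwo →ₗ[ℂ] ellTwo)) hN0 hN.1.2.1
    exact heig x hx0 μ hx
  have : SeparableSpace ellTwo := (default : HilbertBasis ℕ ℂ ellTwo).separableSpace
  have : SecondCountableTopology ellTwo := UniformSpace.secondCountable_of_separable _
  have : CompleteSpace N := hN.1.1.completeSpace_coe
  obtain ⟨e⟩ := nonempty_linearIsometryEquiv_lp_nat hNinf
  have hTN : ∀ x ∈ N, T x ∈ N := fun _ hx => hN.1.2.1 hx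
  refine ⟨e.toContinuousLinearEquiv.conjContinuousAlgEquiv (T.restrict hTN), fun x hx => ?_⟩
  refine (T.restrict hTN).dense_orbitSpan_conj _ x (T.dense_orbitSpan_restrict hTN _ ?_)
  refine (topologicalClosure_orbitSpan_eq_of_minimal hN (fun x hx => (hP3' x hx).le)
    (Subtype.mem _) ?_).ge
  simpa using hx

/-- **Theorem 1.5 of the paper.** Let `g₀ ∈ ℓ₂` with `‖g₀‖ = 1` and `ε ∈ (0,1)`.
If there is a bounded operator `T` on `ℓ₂` with no eigenvector such that
(P3') for every non-zero `x` the distance of the closed linear span `M_x` of the orbit of `x`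
to `g₀` is `< ε`, then there is a bounded operator `T'` on `ℓ₂` with no non-trivial invariant
closed subspace, i.e. every non-zero vector is cyclic for `T'`. -/
theorem exists_operator_without_invariant_subspace_of_P3'
    (g₀ : ellTwo) (hg₀ : ‖g₀‖ = 1) (ε : ℝ) (hε0 : 0 < ε) (hε1 : ε < 1)
    (T : ellTwo →L[ℂ] ellTwo)
    -- `T` has no eigenvector:
    (heig : ∀ x : ellTwo, x ≠ 0 → ∀ l : ℂ, T x ≠ l • x)
    -- (P3'): the distance of the closed linear span of any orbit of a non-zero vector
    -- to `g₀` is `< ε`: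
    (hP3' : ∀ x : ellTwo, x ≠ 0 →
      Metric.infDist g₀
        (((Submodule.span ℂ (Set.range fun n : ℕ => (T ^ n) x)).topologicalClosure :
          Submodule ℂ ellTwo) : Set ellTwo) < ε) :
    ∃ T' : ellTwo →L[ℂ] ellTwo,
      ∀ x : ellTwo, x ≠ 0 →
        Dense ((Submodule.span ℂ (Set.range fun n : ℕ => (T' ^ n) x) :
          Submodule ℂ ellTwo) : Set ellTwo) :=
  exists_operator_without_invariant_subspace_of_P3'_general g₀ hg₀ ε hε1 T heig hP3'
end

section
/- Let ℓ₂ be the complex Hilbert space of square-summable complex sequences, let g₀ ∈ ℓ₂ with ‖g₀‖ = 1, and let ε ∈ (0,1). If T is a bounded linear operator on ℓ₂ such that for every non-zero x ∈ ℓ₂ one has inf_{n∈ℕ} ‖T^n x − g₀‖ < ε, then T has no eigenvector: there is no non-zero x ∈ ℓ₂ and λ ∈ ℂ with Tx = λx. -/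
/-- Let `g₀ ∈ ℓ₂` with `‖g₀‖ = 1` and `ε ∈ (0,1)`.  If `T` is a bounded
operator on `ℓ₂` such that for every non-zero `x` the distance of the orbit of `x` to `g₀` is
`< ε`, then `T` has no eigenvector. -/
theorem no_eigenvector_of_orbits_close_to_g0
    (g₀ : ellTwo) (hg₀ : ‖g₀‖ = 1) (ε : ℝ) (hε0 : 0 < ε) (hε1 : ε < 1)
    (T : ellTwo →L[ℂ] ellTwo)
    (hP3 : ∀ x : ellTwo, x ≠ 0 →
      Metric.infDist g₀ (Set.range fun n : ℕ => (T ^ n) x) < ε) :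
    ¬ ∃ x : ellTwo, x ≠ 0 ∧ ∃ l : ℂ, T x = l • x := by
  rintro ⟨x, hx, l, hTx⟩
  have hxnorm : 0 < ‖x‖ := norm_pos_iff.mpr hx
  have hpow : ∀ n : ℕ, (T ^ n) x = l ^ n • x := by
    intro n
    induction n with
    | zero => simp
    | succ n ih =>
      rw [pow_succ, ContinuousLinearMap.mul_apply, hTx, map_smul, ih,
        smul_smul, mul_comm l (l ^ n), pow_succ]
  rcases le_total ‖l‖ 1 with hl | hl
  · -- case ‖l‖ ≤ 1 : scale x to norm 1 - ε
    set c : ℂ := (((1 - ε) / ‖x‖ : ℝ) : ℂ) with hc_def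
    have hrpos : (0:ℝ) < (1 - ε) / ‖x‖ := div_pos (by linarith) hxnorm
    have hcnorm : ‖c‖ = (1 - ε) / ‖x‖ := by
      rw [hc_def, Complex.norm_real, Real.norm_of_nonneg hrpos.le]
    have hc : c ≠ 0 := by
      intro hzero
      rw [hzero, norm_zero] at hcnorm
      linarith
    have hy : (c • x) ≠ 0 := smul_ne_zero hc hx
    have h := hP3 (c • x) hy
    obtain ⟨y, ⟨n, rfl⟩, hlt⟩ :=
      (Metric.infDist_lt_iff (Set.range_nonempty _)).mp h
    have heq : (T ^ n) (c • x) = (c * l ^ n) • x := by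
      rw [map_smul, hpow, smul_smul]
    simp only [heq, dist_eq_norm] at hlt
    have hnorm : ‖(c * l ^ n) • x‖ ≤ 1 - ε := by
      rw [norm_smul, norm_mul, norm_pow, hcnorm]
      have h1 : ‖l‖ ^ n ≤ 1 := pow_le_one₀ (norm_nonneg l) hl
      calc (1 - ε) / ‖x‖ * ‖l‖ ^ n * ‖x‖ = (1 - ε) * ‖l‖ ^ n := by
            field_simp
        _ ≤ (1 - ε) * 1 := by
            apply mul_le_mul_of_nonneg_left h1; linarith
        _ = 1 - ε := by ring
    have hge : ε ≤ ‖g₀ - (c * l ^ n) • x‖ :=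
      calc ε = 1 - (1 - ε) := by ring
        _ ≤ ‖g₀‖ - ‖(c * l ^ n) • x‖ := by rw [hg₀]; linarith
        _ ≤ ‖g₀ - (c * l ^ n) • x‖ := norm_sub_norm_le _ _
    linarith
  · -- case 1 ≤ ‖l‖ : scale x to norm 1 + ε
    set c : ℂ := (((1 + ε) / ‖x‖ : ℝ) : ℂ) with hc_def
    have hrpos : (0:ℝ) < (1 + ε) / ‖x‖ := div_pos (by linarith) hxnorm
    have hcnorm : ‖c‖ = (1 + ε) / ‖x‖ := by
      rw [hc_def, Complex.norm_real, Real.norm_of_nonneg hrpos.le]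
    have hc : c ≠ 0 := by
      intro hzero
      rw [hzero, norm_zero] at hcnorm
      linarith
    have hy : (c • x) ≠ 0 := smul_ne_zero hc hx
    have h := hP3 (c • x) hy
    obtain ⟨y, ⟨n, rfl⟩, hlt⟩ :=
      (Metric.infDist_lt_iff (Set.range_nonempty _)).mp h
    have heq : (T ^ n) (c • x) = (c * l ^ n) • x := by
      rw [map_smul, hpow, smul_smul]
    simp only [heq, dist_eq_norm] at hlt
    have hnorm : 1 + ε ≤ ‖(c * l ^ n) • x‖ := by
      rw [norm_smul, norm_mul, norm_pow, hcnorm]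
      have h1 : 1 ≤ ‖l‖ ^ n := one_le_pow₀ hl
      calc (1 + ε) = (1 + ε) * 1 := by ring
        _ ≤ (1 + ε) * ‖l‖ ^ n := by
            apply mul_le_mul_of_nonneg_left h1; linarith
        _ = (1 + ε) / ‖x‖ * ‖l‖ ^ n * ‖x‖ := by field_simp
    have hge : ε ≤ ‖g₀ - (c * l ^ n) • x‖ :=
      calc ε = (1 + ε) - 1 := by ring
        _ ≤ ‖(c * l ^ n) • x‖ - ‖g₀‖ := by rw [hg₀]; linarith
        _ ≤ ‖(c * l ^ n) • x - g₀‖ := norm_sub_norm_le _ _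
        _ = ‖g₀ - (c * l ^ n) • x‖ := norm_sub_rev _ _
    linarith
end

section
/- Let X be a real or complex Banach space which is quasi-reflexive of order 1, and let M be a closed linear subspace of X. Then: (i) M, endowed with the induced norm, is either reflexive or quasi-reflexive of order 1; and (ii) the quotient space X/M, endowed with the quotient norm, is either reflexive or quasi-reflexive of order 1. -/
/-- A (semi)normed space `E` over `𝕜` is reflexive if the canonical embedding into its
bidual is surjective. -/
def IsReflexiveSpace (𝕜 : Type*) (E : Type*) [NontriviallyNormedField 𝕜]
    [SeminormedAddCommGroup E] [NormedSpace 𝕜 E] : Prop :=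
  Function.Surjective (NormedSpace.inclusionInDoubleDual 𝕜 E)

/-- A (semi)normed space `E` over `𝕜` is quasi-reflexive of order `1` if the canonical
embedding of `E` into its bidual has range of codimension `1`, i.e. the quotient of the
bidual by this range is one-dimensional. -/
def IsQuasiReflexiveOfOrderOne (𝕜 : Type*) (E : Type*) [NontriviallyNormedField 𝕜]
    [SeminormedAddCommGroup E] [NormedSpace 𝕜 E] : Prop :=
  Module.finrank 𝕜
    ((@Submodule.hasQuotient 𝕜 (StrongDual 𝕜 (StrongDual 𝕜 E)) _ _ _).Quotient
      (LinearMap.range (NormedSpace.inclusionInDoubleDual 𝕜 E : E →ₗ[𝕜] StrongDual 𝕜 (StrongDual 𝕜 E)))) = 1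


/-!
A continuous linear map `f : E →L[𝕜] F` has a second transpose `f''` mapping the canonical
image of `E` in `E''` into that of `F` in `F''`, so it induces a linear map between the quotients
`E'' ⧸ E` and `F'' ⧸ F`. For the inclusion of a closed subspace `M` of `X` the induced map is
injective: if `f'' Φ` is the image of `x ∈ X`, a functional vanishing on `M` but not at `x`
(Hahn–Banach) shows `x ∈ M`, and since every functional on `M` extends to `X`, `Φ` is the image
of `x`. For the quotient map `X → X ⧸ M` it is surjective, because its transpose is an isometric
embedding, whose own transpose is onto by Hahn–Banach. In both cases the quotient attached to `M`
or `X ⧸ M` has dimension at most that of `X'' ⧸ X`, which is `1`.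
-/

open NormedSpace ContinuousLinearMap Module Function Filter Topology

universe u

-- Instance search does not find `Submodule.hasQuotient` on duals by itself.
instance StrongDual.instHasQuotientSubmodule {𝕜 F : Type*} [NontriviallyNormedField 𝕜]
    [SeminormedAddCommGroup F] [NormedSpace 𝕜 F] :
    HasQuotient (StrongDual 𝕜 F) (Submodule 𝕜 (StrongDual 𝕜 F)) :=
  Submodule.hasQuotient

namespace Submodule

variable {R M N : Type*} [Ring R] [AddCommGroup M] [Module R M] [AddCommGroup N] [Module R N]
  {p : Submodule R M} {q : Submodule R N} (f : M →ₗ[R] N)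

theorem mapQ_injective_of_comap_le (h : p ≤ q.comap f) (h' : q.comap f ≤ p) :
    Injective (p.mapQ q f h) := by
  rw [← LinearMap.ker_eq_bot, ker_mapQ, le_antisymm h' h, mkQ_map_self]

theorem mapQ_surjective_of_surjective (h : p ≤ q.comap f) (hf : Surjective f) :
    Surjective (p.mapQ q f h) := by
  rw [← LinearMap.range_eq_top, range_mapQ, LinearMap.range_eq_top.mpr hf, map_top, range_mkQ]

end Submodule

section Bidual

variable (𝕜 : Type*) [NontriviallyNormedField 𝕜] (E : Type*) [SeminormedAddCommGroup E]
  [NormedSpace 𝕜 E]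

noncomputable abbrev bidualRange : Submodule 𝕜 (StrongDual 𝕜 (StrongDual 𝕜 E)) :=
  LinearMap.range (inclusionInDoubleDual 𝕜 E).toLinearMap

abbrev BidualQuotient : Type _ := StrongDual 𝕜 (StrongDual 𝕜 E) ⧸ bidualRange 𝕜 E

variable {𝕜 E}

theorem IsQuasiReflexiveOfOrderOne.rank_eq_one (h : IsQuasiReflexiveOfOrderOne 𝕜 E) :
    Module.rank 𝕜 (BidualQuotient 𝕜 E) = 1 :=
  rank_eq_one_iff_finrank_eq_one.mpr h

theorem isReflexiveSpace_or_isQuasiReflexiveOfOrderOne_of_rank_le_one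
    (h : Module.rank 𝕜 (BidualQuotient 𝕜 E) ≤ 1) :
    IsReflexiveSpace 𝕜 E ∨ IsQuasiReflexiveOfOrderOne 𝕜 E := by
  have : Module.Free 𝕜 (BidualQuotient 𝕜 E) := .of_divisionRing 𝕜 _
  have : Module.Finite 𝕜 (BidualQuotient 𝕜 E) :=
    Module.rank_lt_aleph0_iff.mp (h.trans_lt Cardinal.one_lt_aleph0)
  rw [← finrank_eq_rank, Nat.cast_le_one] at h
  rcases Nat.le_one_iff_eq_zero_or_eq_one.mp h with h0 | h1
  · exact .inl <| LinearMap.range_eq_top.mp <|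
      Submodule.Quotient.subsingleton_iff.mp (finrank_zero_iff.mp h0)
  · exact .inr h1

variable {F : Type*} [SeminormedAddCommGroup F] [NormedSpace 𝕜 F]

namespace ContinuousLinearMap

noncomputable abbrev dualMap (f : E →L[𝕜] F) : StrongDual 𝕜 F →L[𝕜] StrongDual 𝕜 E :=
  precomp 𝕜 f

theorem bidualRange_le_comap_dualMap_dualMap (f : E →L[𝕜] F) :
    bidualRange 𝕜 E ≤ (bidualRange 𝕜 F).comap f.dualMap.dualMap.toLinearMap := by
  rintro _ ⟨x, rfl⟩
  exact ⟨f x, rfl⟩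

end ContinuousLinearMap

end Bidual

namespace ContinuousLinearMap

variable {𝕜 : Type*} [NontriviallyNormedField 𝕜] {E F : Type u} [SeminormedAddCommGroup E]
  [NormedSpace 𝕜 E] [SeminormedAddCommGroup F] [NormedSpace 𝕜 F] (f : E →L[𝕜] F)

theorem rank_bidualQuotient_le_of_comap_le
    (h : (bidualRange 𝕜 F).comap f.dualMap.dualMap.toLinearMap ≤ bidualRange 𝕜 E) :
    Module.rank 𝕜 (BidualQuotient 𝕜 E) ≤ Module.rank 𝕜 (BidualQuotient 𝕜 F) :=
  LinearMap.rank_le_of_injective _ <|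
    Submodule.mapQ_injective_of_comap_le _ (bidualRange_le_comap_dualMap_dualMap f) h

theorem rank_bidualQuotient_le_of_surjective (hf : Surjective f.dualMap.dualMap) :
    Module.rank 𝕜 (BidualQuotient 𝕜 F) ≤ Module.rank 𝕜 (BidualQuotient 𝕜 E) :=
  LinearMap.rank_le_of_surjective _ <|
    Submodule.mapQ_surjective_of_surjective _ (bidualRange_le_comap_dualMap_dualMap f) hf

end ContinuousLinearMap

section HahnBanach

variable {𝕜 : Type*} [RCLike 𝕜] {E F X : Type*} [NormedAddCommGroup E] [NormedSpace 𝕜 E]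
  [SeminormedAddCommGroup F] [NormedSpace 𝕜 F] [SeminormedAddCommGroup X] [NormedSpace 𝕜 X]

theorem ContinuousLinearMap.dualMap_surjective_of_norm_map (f : E →L[𝕜] F)
    (hf : ∀ x, ‖f x‖ = ‖x‖) : Surjective f.dualMap := by
  intro g
  let e := (⟨f.toLinearMap, hf⟩ : E →ₗᵢ[𝕜] F).equivRange
  obtain ⟨h, hh, -⟩ :=
    exists_extension_norm_eq _ (g.comp e.symm.toContinuousLinearEquiv.toContinuousLinearMap)
  exact ⟨h, ext fun x => (hh (e x)).trans (by simp)⟩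

theorem Submodule.norm_dualMap_mkQL (M : Submodule 𝕜 X) (g : StrongDual 𝕜 (X ⧸ M)) :
    ‖M.mkQL.dualMap g‖ = ‖g‖ := by
  refine le_antisymm ?_ (opNorm_le_bound _ (norm_nonneg _) fun q => ?_)
  · calc ‖g.comp M.mkQL‖ ≤ ‖g‖ * ‖M.mkQL‖ := opNorm_comp_le _ _
      _ ≤ ‖g‖ * 1 := by
        gcongr
        exact opNorm_le_bound _ zero_le_one fun x => by simpa using Quotient.norm_mk_le M x
      _ = ‖g‖ := mul_one _
  · set C := ‖M.mkQL.dualMap g‖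
    have hlim : Tendsto (fun r => C * r) (𝓝[>] ‖q‖) (𝓝 (C * ‖q‖)) :=
      ((continuous_const.mul continuous_id).tendsto _).mono_left nhdsWithin_le_nhds
    refine ge_of_tendsto hlim (eventually_nhdsWithin_of_forall fun r hr => ?_)
    obtain ⟨x, rfl, hx⟩ := QuotientAddGroup.norm_lt_iff.mp hr
    exact (le_opNorm (M.mkQL.dualMap g) x).trans (by gcongr)

theorem Submodule.dualMap_dualMap_mkQL_surjective (M : Submodule 𝕜 X) :
    Surjective M.mkQL.dualMap.dualMap := by
  -- Mathlib registers `NormedAddCommGroup` only on duals of normed spaces; `X ⧸ M` is seminormed.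
  let : NormedAddCommGroup (StrongDual 𝕜 (X ⧸ M)) :=
    .ofSeparation fun g hg => ContinuousLinearMap.ext fun q =>
      norm_le_zero_iff.mp ((le_opNorm g q).trans (by rw [hg, zero_mul]))
  exact dualMap_surjective_of_norm_map _ M.norm_dualMap_mkQL

theorem Submodule.exists_dual_eq_zero_of_notMem {M : Submodule 𝕜 X} (hM : IsClosed (M : Set X))
    {x : X} (hx : x ∉ M) : ∃ g : StrongDual 𝕜 X, (∀ m ∈ M, g m = 0) ∧ g x ≠ 0 := by
  have hx' : ‖(Quotient.mk x : X ⧸ M)‖ ≠ 0 :=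
    (QuotientAddGroup.norm_mk_eq_zero_iff_mem_closure (S := M.toAddSubgroup)).not.mpr
      (by rwa [coe_toAddSubgroup, hM.closure_eq])
  obtain ⟨g, -, hg⟩ := exists_dual_vector 𝕜 _ hx'
  refine ⟨g.comp M.mkQL, fun m hm => ?_, ?_⟩
  · simp [(Quotient.mk_eq_zero M).mpr hm]
  · simpa [hg] using hx'

theorem Submodule.comap_dualMap_dualMap_subtypeL_le {M : Submodule 𝕜 E}
    (hM : IsClosed (M : Set E)) :
    (bidualRange 𝕜 E).comap M.subtypeL.dualMap.dualMap.toLinearMap ≤ bidualRange 𝕜 M := by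
  rintro Φ ⟨x, hx⟩
  have hxM : x ∈ M := by
    by_contra hxM
    obtain ⟨g, hgM, hgx⟩ := exists_dual_eq_zero_of_notMem hM hxM
    have hg : M.subtypeL.dualMap g = 0 := ContinuousLinearMap.ext fun m => hgM m m.2
    apply hgx
    calc g x = M.subtypeL.dualMap.dualMap Φ g := congr($hx g)
      _ = Φ (M.subtypeL.dualMap g) := rfl
      _ = 0 := by rw [hg, map_zero]
  refine ⟨⟨x, hxM⟩, ContinuousLinearMap.ext fun h => ?_⟩
  obtain ⟨g, rfl⟩ := dualMap_surjective_of_norm_map M.subtypeL (fun _ => rfl) h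
  exact congr($hx g)

end HahnBanach

theorem subspace_and_quotient_of_quasireflexive_general
    (𝕜 : Type*) [RCLike 𝕜] (X : Type*) [NormedAddCommGroup X] [NormedSpace 𝕜 X]
    (hX : IsQuasiReflexiveOfOrderOne 𝕜 X)
    (M : Submodule 𝕜 X) (hM : IsClosed (M : Set X)) :
    (IsReflexiveSpace 𝕜 ↥M ∨ IsQuasiReflexiveOfOrderOne 𝕜 ↥M) ∧
    (IsReflexiveSpace 𝕜 (X ⧸ M) ∨ IsQuasiReflexiveOfOrderOne 𝕜 (X ⧸ M)) :=
  ⟨isReflexiveSpace_or_isQuasiReflexiveOfOrderOne_of_rank_le_one <| hX.rank_eq_one ▸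
      rank_bidualQuotient_le_of_comap_le M.subtypeL (M.comap_dualMap_dualMap_subtypeL_le hM),
    isReflexiveSpace_or_isQuasiReflexiveOfOrderOne_of_rank_le_one <| hX.rank_eq_one ▸
      rank_bidualQuotient_le_of_surjective M.mkQL M.dualMap_dualMap_mkQL_surjective⟩

/-- **Fact 6.1 of the paper.** Let `X` be a (real or complex) Banach space which
is quasi-reflexive of order `1` and `M` a closed linear subspace of `X`.  Then (i) `M` is either
reflexive or quasi-reflexive of order `1`, and (ii) the quotient `X/M` is either reflexive or
quasi-reflexive of order `1`. -/
theorem subspace_and_quotient_of_quasireflexive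
    (𝕜 : Type*) [RCLike 𝕜] (X : Type*) [NormedAddCommGroup X] [NormedSpace 𝕜 X]
    [CompleteSpace X]
    (hX : IsQuasiReflexiveOfOrderOne 𝕜 X)
    (M : Submodule 𝕜 X) (hM : IsClosed (M : Set X)) :
    (IsReflexiveSpace 𝕜 ↥M ∨ IsQuasiReflexiveOfOrderOne 𝕜 ↥M) ∧
    (IsReflexiveSpace 𝕜 (X ⧸ M) ∨ IsQuasiReflexiveOfOrderOne 𝕜 (X ⧸ M)) :=
  subspace_and_quotient_of_quasireflexive_general 𝕜 X hX M hM
end
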